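/- Let s₃ ≈ 1.755 be the unique root in the interval (1,2) of s³ − 2s² + s − 1 = 0. For every real s with (1 + √5)/2 ≤ s ≤ s₃, every instance of the favorite-machine scheduling game on two machines with parameter s, and every allocation x that is a strong equilibrium, the makespan of x is at most (s + 1)/s times the optimal makespan. -/

import Mathlib

/-!
Fix any allocation `z`, a machine `H` of the strong equilibrium `x`, and let `L` be the other
machine; suppose `s ℓ_H(x) > (s + 1) C(z)`. Then `ℓ_H(x) > C(z)`, so comparing `x` with `z`
gives `ℓ_L(x) ≤ C(z)`. Nash stability of the jobs on `H` and `s < 2` then force `z` to move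
exactly one job `j₁` from `H` to `L`, and `L` is its favorite machine. Split the jobs by their
machines under `x` and `z` and by their favorite machines. Besides `z`, three coalitional
deviations from `x` give linear inequalities between these parts: `j₁` alone moving to `L`,
all jobs swapping machines, and `j₁` moving to `L` while the jobs on `L` that favor `H` move
to `H`. Together with `s² ≥ s + 1` these contradict the assumption.
-/

open Finset

/-- Processing time of job `j` on machine `i` in the favorite-machine model:
`q j` on the favorite machine `f j` and `s * q j` on the other machine. -/
noncomputable def ptime (s : ℝ) {n : ℕ} (q : Fin n → ℝ) (f : Fin n → Fin 2)
    (i : Fin 2) (j : Fin n) : ℝ :=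
  if f j = i then q j else s * q j

/-- Load of machine `i` under allocation `x`. -/
noncomputable def load (s : ℝ) {n : ℕ} (q : Fin n → ℝ) (f : Fin n → Fin 2)
    (x : Fin n → Fin 2) (i : Fin 2) : ℝ :=
  ∑ j ∈ Finset.univ.filter (fun j => x j = i), ptime s q f i j

/-- Makespan (maximum load) of allocation `x`. -/
noncomputable def makespan (s : ℝ) {n : ℕ} (q : Fin n → ℝ) (f : Fin n → Fin 2)
    (x : Fin n → Fin 2) : ℝ :=
  max (load s q f x 0) (load s q f x 1)

/-- The optimal (minimum) makespan over all allocations. -/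
noncomputable def optMakespan (s : ℝ) {n : ℕ} (q : Fin n → ℝ) (f : Fin n → Fin 2) : ℝ :=
  ⨅ y : Fin n → Fin 2, makespan s q f y

/-- Pure Nash equilibrium: no job can move to the other machine and find there
a load smaller than its current cost. -/
def IsNE (s : ℝ) {n : ℕ} (q : Fin n → ℝ) (f : Fin n → Fin 2)
    (x : Fin n → Fin 2) : Prop :=
  ∀ j : Fin n, ∀ i : Fin 2, i ≠ x j →
    load s q f x (x j) ≤ load s q f (Function.update x j i) i

/-- Strong equilibrium: for every deviation `y` differing from `x` on a nonempty
set of jobs, some deviating job does not improve its cost. -/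
def IsSE (s : ℝ) {n : ℕ} (q : Fin n → ℝ) (f : Fin n → Fin 2)
    (x : Fin n → Fin 2) : Prop :=
  ∀ y : Fin n → Fin 2, (∃ j, y j ≠ x j) →
    ∃ j, y j ≠ x j ∧ load s q f x (x j) ≤ load s q f y (y j)

-- On `Fin 2`, `i.rev` is the machine other than `i`.
theorem Fin.two_eq_or_eq_rev (i k : Fin 2) : i = k ∨ i = k.rev := by
  revert i k; decide

theorem Fin.two_ne_rev (i : Fin 2) : i ≠ i.rev := by
  revert i; decide

/- In the application, `a` and `b` are the loads of `x` on `H` and `L`, `o` is `C(z)`, `p` is the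
size of `j₁`, `α` and `τ` are the `H`-loads of the jobs that `x` puts on `H` and `L` respectively
and `z` puts on `H`, `ρ` is the `L`-load of the jobs on `L` under both, and `π` and `μ` are the
`H`-load and the `L`-load of the jobs on `L` under `x` favoring `H` and `L` respectively. -/
theorem mul_le_add_one_mul_of_bounds {s o a b α τ ρ π μ p : ℝ} (hs : 1 < s) (hφ : s + 1 ≤ s ^ 2)
    (hα : 0 ≤ α) (hp : 0 ≤ p) (ha : a = α + s * p) (hατ : α + τ ≤ o) (hρ : ρ + p ≤ o)
    (hb : b ≤ o) (hNE : a ≤ b + p) (hbπμ : b = s * π + μ) (hμ : s * μ ≤ τ + s * ρ)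
    (hswap : π + s * μ < b → a ≤ s * α + p) (hshift : μ + p < a → b ≤ α + π) :
    s * a ≤ (s + 1) * o := by
  have hαp : α + (s - 1) * p ≤ o := by linarith
  have of_mul_le : s * p ≤ o → s * a ≤ (s + 1) * o := fun h => by
    nlinarith [mul_le_mul_of_nonneg_left hαp (by linarith : (0 : ℝ) ≤ s)]
  rcases lt_or_ge (π + s * μ) b with hI | hII
  · apply of_mul_le
    have : (s - 1) * p ≤ (s - 1) * α := by linarith [hswap hI]
    have : p ≤ α := le_of_mul_le_mul_left this (by linarith)
    nlinarith
  rcases le_or_gt a (μ + p) with hIIa | hIIb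
  · nlinarith
  · apply of_mul_le
    have hshift := hshift hIIb
    have : (s - 1) * π ≤ (s - 1) * μ := by linarith
    have hπμ : π ≤ μ := le_of_mul_le_mul_left this (by linarith)
    have hsπ : s * π ≤ α := by linarith
    have hpπ : (s - 1) * p ≤ π := by linarith
    nlinarith [mul_le_mul_of_nonneg_left hpπ (by linarith : (0 : ℝ) ≤ s)]

section

variable {s : ℝ} {n : ℕ} {q : Fin n → ℝ} {f : Fin n → Fin 2}

variable (s q f) in
noncomputable def work (i : Fin 2) (S : Finset (Fin n)) : ℝ :=
  ∑ j ∈ S, ptime s q f i j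

theorem load_eq_work (x : Fin n → Fin 2) (i : Fin 2) :
    load s q f x i = work s q f i {j | x j = i} := rfl

theorem ptime_of_eq {i : Fin 2} {j : Fin n} (h : f j = i) : ptime s q f i j = q j := if_pos h

theorem ptime_rev_of_eq {i : Fin 2} {j : Fin n} (h : f j = i) :
    ptime s q f i.rev j = s * ptime s q f i j := by
  rw [ptime_of_eq h, ptime, if_neg (h ▸ Fin.two_ne_rev (f j))]

theorem ptime_nonneg (hs : 0 ≤ s) {j : Fin n} (hq : 0 ≤ q j) (i : Fin 2) :
    0 ≤ ptime s q f i j := by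
  unfold ptime; split_ifs <;> positivity

theorem le_ptime (hs : 1 ≤ s) {j : Fin n} (hq : 0 ≤ q j) (i : Fin 2) :
    q j ≤ ptime s q f i j := by
  unfold ptime; split_ifs <;> nlinarith

theorem ptime_le_mul_ptime (hs : 1 ≤ s) {j : Fin n} (hq : 0 ≤ q j) (i k : Fin 2) :
    ptime s q f i j ≤ s * ptime s q f k j :=
  calc ptime s q f i j ≤ s * q j := by unfold ptime; split_ifs <;> nlinarith
    _ ≤ s * ptime s q f k j := mul_le_mul_of_nonneg_left (le_ptime hs hq k) (by linarith)

theorem work_nonneg (hs : 0 ≤ s) (hq : ∀ j, 0 ≤ q j) (i : Fin 2) (S : Finset (Fin n)) :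
    0 ≤ work s q f i S :=
  sum_nonneg fun j _ => ptime_nonneg hs (hq j) i

theorem work_mono (hs : 0 ≤ s) (hq : ∀ j, 0 ≤ q j) (i : Fin 2) {S T : Finset (Fin n)}
    (hST : S ⊆ T) : work s q f i S ≤ work s q f i T :=
  sum_le_sum_of_subset_of_nonneg hST fun j _ _ => ptime_nonneg hs (hq j) i

theorem work_empty (i : Fin 2) : work s q f i ∅ = 0 :=
  sum_empty

theorem work_singleton (i : Fin 2) (j : Fin n) : work s q f i {j} = ptime s q f i j :=
  sum_singleton _ _

theorem work_filter_add_work_filter_rev (i k : Fin 2) (g : Fin n → Fin 2) (S : Finset (Fin n)) :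
    work s q f i {j ∈ S | g j = k} + work s q f i {j ∈ S | g j = k.rev} = work s q f i S := by
  rw [work, work, work, ← sum_filter_add_sum_filter_not S (g · = k)]
  congr 2
  ext j
  grind

theorem load_eq_work_add_work (y g : Fin n → Fin 2) (i k : Fin 2) :
    load s q f y i = work s q f i {j ∈ {j | g j = k} | y j = i} +
      work s q f i {j ∈ {j | g j = k.rev} | y j = i} := by
  rw [load_eq_work, ← work_filter_add_work_filter_rev i k g {j | y j = i}]
  congr 1 <;> rw [filter_comm]

theorem work_rev_of_forall_eq {i : Fin 2} {S : Finset (Fin n)} (h : ∀ j ∈ S, f j = i) :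
    work s q f i.rev S = s * work s q f i S := by
  rw [work, work, mul_sum]
  exact sum_congr rfl fun j hj => ptime_rev_of_eq (h j hj)

theorem work_le_mul_work (hs : 1 ≤ s) (hq : ∀ j, 0 ≤ q j) (i k : Fin 2) (S : Finset (Fin n)) :
    work s q f i S ≤ s * work s q f k S := by
  rw [work, work, mul_sum]
  exact sum_le_sum fun j _ => ptime_le_mul_ptime hs (hq j) i k

def switchOn (T : Finset (Fin n)) (x : Fin n → Fin 2) : Fin n → Fin 2 :=
  fun j => if j ∈ T then (x j).rev else x j

theorem load_switchOn (T : Finset (Fin n)) (x : Fin n → Fin 2) (i : Fin 2) :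
    load s q f (switchOn T x) i =
      work s q f i (({j | x j = i} : Finset (Fin n)) \ T) + work s q f i {j ∈ T | x j = i.rev} := by
  rw [load_eq_work, work, work, work, ← sum_union]
  · congr 1
    ext j
    simp only [switchOn, mem_filter, mem_union, mem_sdiff]
    grind
  · exact disjoint_left.2 fun j h1 h2 => (mem_sdiff.1 h1).2 (mem_filter.1 h2).1

theorem load_le_makespan (y : Fin n → Fin 2) (i : Fin 2) :
    load s q f y i ≤ makespan s q f y := by
  fin_cases i
  exacts [le_max_left _ _, le_max_right _ _]

variable {x z : Fin n → Fin 2} {H : Fin 2}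

theorem IsSE.exists_load_le_makespan (hx : IsSE s q f x) (hzx : z ≠ x) :
    ∃ k, load s q f x (x k) ≤ makespan s q f z := by
  obtain ⟨j, hj⟩ := Function.ne_iff.1 hzx
  obtain ⟨k, -, hk⟩ := hx z ⟨j, hj⟩
  exact ⟨k, hk.trans (load_le_makespan z _)⟩

theorem IsSE.exists_le_load_switchOn (hx : IsSE s q f x) {T : Finset (Fin n)} (hT : T.Nonempty) :
    ∃ k ∈ T, load s q f x (x k) ≤ load s q f (switchOn T x) (x k).rev := by
  obtain ⟨j, hj⟩ := hT
  obtain ⟨k, hk, hle⟩ :=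
    hx (switchOn T x) ⟨j, by simpa [switchOn, hj] using (Fin.two_ne_rev _).symm⟩
  have hkT : k ∈ T := by
    by_contra h
    simp [switchOn, h] at hk
  exact ⟨k, hkT, by simpa [switchOn, hkT] using hle⟩

theorem IsSE.load_le_load_rev_add_ptime (hx : IsSE s q f x) (j : Fin n) :
    load s q f x (x j) ≤ load s q f x (x j).rev + ptime s q f (x j).rev j := by
  obtain ⟨k, hk, hle⟩ := hx.exists_le_load_switchOn (singleton_nonempty j)
  rw [mem_singleton] at hk
  subst hk
  have hout : ({i | x i = (x k).rev} : Finset (Fin n)) \ {k} =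
      ({i | x i = (x k).rev} : Finset (Fin n)) := by
    rw [sdiff_singleton_eq_erase, erase_eq_of_notMem (by simpa using Fin.two_ne_rev (x k))]
  have hin : ({i ∈ {k} | x i = (x k).rev.rev} : Finset (Fin n)) = {k} := by simp
  rwa [load_switchOn, hout, hin, work_singleton, ← load_eq_work] at hle

theorem IsSE.load_le_work_rev_of_swap (hx : IsSE s q f x)
    (hswap : work s q f H {i | x i = H.rev} < load s q f x H.rev) :
    load s q f x H ≤ work s q f H.rev {i | x i = H} := by
  have hload : ∀ i, load s q f (switchOn univ x) i = work s q f i {k | x k = i.rev} := by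
    intro i
    rw [load_switchOn, sdiff_eq_empty_iff_subset.2 (subset_univ _), work_empty, zero_add]
  rcases isEmpty_or_nonempty (Fin n) with hn | hn
  · simp [load_eq_work, work]
  obtain ⟨k, -, hk⟩ := hx.exists_le_load_switchOn univ_nonempty
  rcases Fin.two_eq_or_eq_rev (x k) H with hkH | hkL
  · rwa [hkH, hload, Fin.rev_rev] at hk
  · rw [hkL, hload, Fin.rev_rev] at hk
    exact absurd hk (not_le.2 hswap)

theorem IsSE.load_rev_le_makespan (hx : IsSE s q f x)
    (hz : makespan s q f z < load s q f x H) : load s q f x H.rev ≤ makespan s q f z := by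
  have hzx : z ≠ x := by
    rintro rfl
    exact absurd hz (not_lt.2 (load_le_makespan z H))
  obtain ⟨k, hk⟩ := hx.exists_load_le_makespan hzx
  rcases Fin.two_eq_or_eq_rev (x k) H with hkH | hkL
  · exact absurd (hkH ▸ hk) (not_le.2 hz)
  · rwa [hkL] at hk

theorem IsSE.exists_moved_job (hx : IsSE s q f x) (hs : 0 < s) (hs2 : s < 2)
    (hq : ∀ j, 0 ≤ q j) (hb : load s q f x H.rev ≤ makespan s q f z)
    (hkey : (s + 1) * makespan s q f z < s * load s q f x H) :
    ∃ j₁, ({j ∈ {j | x j = H} | z j = H.rev} : Finset (Fin n)) = {j₁} ∧ f j₁ = H.rev := by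
  set o := makespan s q f z
  set D : Finset (Fin n) := {j ∈ {j | x j = H} | z j = H.rev}
  have ho : 0 ≤ o := (work_nonneg hs.le hq 0 _).trans (load_le_makespan z 0)
  have hsplit : work s q f H {j ∈ {j | x j = H} | z j = H} + work s q f H D = load s q f x H :=
    work_filter_add_work_filter_rev H H z _
  have hstay : work s q f H {j ∈ {j | x j = H} | z j = H} ≤ o :=
    (work_mono hs.le hq H fun j => by simp).trans (load_le_makespan z H)
  have hmoved : work s q f H.rev D ≤ o :=
    (work_mono hs.le hq H.rev fun j => by simp [D]).trans (load_le_makespan z H.rev)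
  have hNE : ∀ j ∈ D, load s q f x H ≤ load s q f x H.rev + ptime s q f H.rev j := by
    intro j hj
    have hxj : x j = H := by simp_all [D]
    simpa [hxj] using hx.load_le_load_rev_add_ptime j
  obtain ⟨j₁, hj₁⟩ : D.Nonempty := by
    rw [nonempty_iff_ne_empty]
    intro h
    rw [h, work_empty] at hsplit
    nlinarith
  have hD : D = {j₁} := by
    refine eq_singleton_iff_unique_mem.2 ⟨hj₁, fun j hj => ?_⟩
    by_contra hne
    -- otherwise `2 ℓ_H(x) ≤ 2 ℓ_L(x) + C(z) ≤ 3 C(z)`, impossible as `s < 2`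
    have hpair : ptime s q f H.rev j + ptime s q f H.rev j₁ ≤ work s q f H.rev D := by
      rw [← sum_pair hne]
      exact work_mono hs.le hq _ (insert_subset_iff.2 ⟨hj, singleton_subset_iff.2 hj₁⟩)
    nlinarith [hNE j hj, hNE j₁ hj₁, mul_nonneg (sub_nonneg.2 hs2.le) ho]
  refine ⟨j₁, hD, ?_⟩
  rcases Fin.two_eq_or_eq_rev (f j₁) H with hfH | hfL
  · -- then `s q j₁ ≤ C(z)` and `ℓ_H(x) ≤ C(z) + q j₁`
    rw [hD, work_singleton, ptime_rev_of_eq hfH, ptime_of_eq hfH] at hmoved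
    rw [hD, work_singleton, ptime_of_eq hfH] at hsplit
    nlinarith
  · exact hfL

theorem IsSE.load_le_mul_work_add_of_swap (hx : IsSE s q f x) (hs : 1 ≤ s) (hq : ∀ j, 0 ≤ q j)
    {j₁ : Fin n}
    (hD : ({j ∈ {j | x j = H} | z j = H.rev} : Finset (Fin n)) = {j₁}) (hfav : f j₁ = H.rev)
    (hswap : work s q f H {j ∈ {j | x j = H.rev} | f j = H} +
      s * work s q f H.rev {j ∈ {j | x j = H.rev} | f j = H.rev} < load s q f x H.rev) :
    load s q f x H ≤ s * work s q f H {j ∈ {j | x j = H} | z j = H} + q j₁ := by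
  have hXL : work s q f H {j | x j = H.rev} = work s q f H {j ∈ {j | x j = H.rev} | f j = H} +
      s * work s q f H.rev {j ∈ {j | x j = H.rev} | f j = H.rev} := by
    rw [← work_filter_add_work_filter_rev H H f, ← work_rev_of_forall_eq (by simp), Fin.rev_rev]
  refine (hx.load_le_work_rev_of_swap (hXL ▸ hswap)).trans ?_
  rw [← work_filter_add_work_filter_rev H.rev H z, hD, work_singleton, ptime_of_eq hfav]
  gcongr
  exact work_le_mul_work hs hq _ _ _

theorem IsSE.load_rev_le_of_shift (hx : IsSE s q f x) {j₁ : Fin n}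
    (hD : ({j ∈ {j | x j = H} | z j = H.rev} : Finset (Fin n)) = {j₁}) (hfav : f j₁ = H.rev)
    (hshift : work s q f H.rev {j ∈ {j | x j = H.rev} | f j = H.rev} + q j₁ < load s q f x H) :
    load s q f x H.rev ≤
      work s q f H {j ∈ {j | x j = H} | z j = H} +
        work s q f H {j ∈ {j | x j = H.rev} | f j = H} := by
  have hmoved : ∀ j, x j = H ∧ z j = H.rev ↔ j = j₁ := fun j => by
    simpa using Finset.ext_iff.1 hD j
  have hj₁ : x j₁ = H := ((hmoved j₁).2 rfl).1
  set P : Finset (Fin n) := {j ∈ {j | x j = H.rev} | f j = H}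
  obtain ⟨k, hk, hle⟩ := hx.exists_le_load_switchOn (insert_nonempty j₁ P)
  rcases mem_insert.1 hk with rfl | hkP
  · have hstay : ({j | x j = H.rev} : Finset (Fin n)) \ insert k P =
        ({j ∈ {j | x j = H.rev} | f j = H.rev} : Finset (Fin n)) := by
      ext j; simp [P]; grind [Fin.two_ne_rev]
    have hleave : ({j ∈ insert k P | x j = H.rev.rev} : Finset (Fin n)) = {k} := by
      ext j; simp [P]; grind [Fin.two_ne_rev]
    rw [hj₁, load_switchOn, hstay, hleave, work_singleton, ptime_of_eq hfav] at hle
    linarith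
  · have hxk : x k = H.rev := by simp_all [P]
    have hstay : ({j | x j = H} : Finset (Fin n)) \ insert j₁ P =
        ({j ∈ {j | x j = H} | z j = H} : Finset (Fin n)) := by
      ext j; simp [P]; grind [Fin.two_ne_rev]
    have hleave : ({j ∈ insert j₁ P | x j = H.rev} : Finset (Fin n)) = P := by
      ext j; simp [P]; grind [Fin.two_ne_rev]
    rwa [hxk, Fin.rev_rev, load_switchOn, hstay, hleave] at hle

theorem IsSE.mul_load_le_add_one_mul_makespan (hx : IsSE s q f x) (hs : 1 < s) (hs2 : s < 2)
    (hφ : s + 1 ≤ s ^ 2) (hq : ∀ j, 0 ≤ q j) (z : Fin n → Fin 2) (H : Fin 2) :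
    s * load s q f x H ≤ (s + 1) * makespan s q f z := by
  by_contra! hkey
  have hs0 : 0 ≤ s := by linarith
  have ho : 0 ≤ makespan s q f z := (work_nonneg hs0 hq 0 _).trans (load_le_makespan z 0)
  have hb : load s q f x H.rev ≤ makespan s q f z := hx.load_rev_le_makespan (by nlinarith)
  obtain ⟨j₁, hD, hfav⟩ := hx.exists_moved_job (by linarith) hs2 hq hb hkey
  have hj₁ : x j₁ = H := by simpa using (mem_filter.1 (hD.ge (mem_singleton_self j₁))).1
  refine hkey.not_ge (mul_le_add_one_mul_of_bounds
    (τ := work s q f H {j ∈ {j | x j = H.rev} | z j = H})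
    (ρ := work s q f H.rev {j ∈ {j | x j = H.rev} | z j = H.rev}) hs hφ
    (work_nonneg hs0 hq _ _) (hq j₁) ?_ ?_ ?_ hb ?_ ?_ ?_
    (hx.load_le_mul_work_add_of_swap hs.le hq hD hfav) (hx.load_rev_le_of_shift hD hfav))
  · rw [load_eq_work, ← work_filter_add_work_filter_rev H H z, hD, work_singleton,
      ← Fin.rev_rev H, ptime_rev_of_eq hfav, ptime_of_eq hfav, Fin.rev_rev]
  · exact (load_eq_work_add_work z x H H).symm.trans_le (load_le_makespan z H)
  · rw [add_comm, ← ptime_of_eq (s := s) (q := q) hfav, ← work_singleton, ← hD,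
      ← load_eq_work_add_work z x H.rev H]
    exact load_le_makespan z H.rev
  · simpa [hj₁, ptime_of_eq hfav] using hx.load_le_load_rev_add_ptime j₁
  · rw [load_eq_work, ← work_filter_add_work_filter_rev H.rev H f, work_rev_of_forall_eq (by simp)]
  · set M : Finset (Fin n) := {j ∈ {j | x j = H.rev} | f j = H.rev}
    have hMH : s * work s q f H.rev {j ∈ M | z j = H} = work s q f H {j ∈ M | z j = H} := by
      rw [← work_rev_of_forall_eq (by simp +contextual [M]), Fin.rev_rev]
    rw [← work_filter_add_work_filter_rev H.rev H z M, mul_add, hMH]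
    exact add_le_add (work_mono hs0 hq H fun j => by simp [M]; tauto)
      (mul_le_mul_of_nonneg_left (work_mono hs0 hq H.rev fun j => by simp [M]; tauto) hs0)

end

theorem add_one_le_sq_of_goldenRatio_le {s : ℝ} (hs : Real.goldenRatio ≤ s) : s + 1 ≤ s ^ 2 := by
  nlinarith [Real.goldenRatio_sq, Real.one_lt_goldenRatio]

theorem spoa_upper_interval3_general
    (s₃ : ℝ) (hs₃hi : s₃ < 2)
    (s : ℝ) (hs : (1 + Real.sqrt 5)/2 ≤ s) (hs' : s ≤ s₃)
    {n : ℕ} (q : Fin n → ℝ) (hq : ∀ j, 0 < q j)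
    (f : Fin n → Fin 2) (x : Fin n → Fin 2) (hx : IsSE s q f x) :
    makespan s q f x ≤ ((s + 1)/s) * optMakespan s q f := by
  have hs1 : 1 < s := Real.one_lt_goldenRatio.trans_le hs
  obtain ⟨z, hz⟩ := exists_eq_ciInf_of_finite (f := makespan s q f)
  have hbound := fun H => hx.mul_load_le_add_one_mul_makespan hs1 (hs'.trans_lt hs₃hi)
    (add_one_le_sq_of_goldenRatio_le hs) (fun j => (hq j).le) z H
  rw [optMakespan, ← hz, div_mul_eq_mul_div, le_div_iff₀ (by linarith), mul_comm, makespan,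
    mul_max_of_nonneg _ _ (by linarith)]
  exact max_le (hbound 0) (hbound 1)

theorem spoa_upper_interval3
    (s₃ : ℝ) (hs₃lo : 1 < s₃) (hs₃hi : s₃ < 2)
    (hs₃root : s₃^3 - 2*s₃^2 + s₃ - 1 = 0)
    (s : ℝ) (hs : (1 + Real.sqrt 5)/2 ≤ s) (hs' : s ≤ s₃)
    {n : ℕ} (q : Fin n → ℝ) (hq : ∀ j, 0 < q j)
    (f : Fin n → Fin 2) (x : Fin n → Fin 2) (hx : IsSE s q f x) :
    makespan s q f x ≤ ((s + 1)/s) * optMakespan s q f :=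
  spoa_upper_interval3_general s₃ hs₃hi s hs hs' q hq f x hx
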